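/- Let R be an irreducible root system, C a Weyl chamber with highest root δ. Then for every positive root α ∈ R⁺(C) with α ≠ δ, the difference δ − α is either a positive root, or a sum β₁ + β₂ of two positive roots β₁, β₂ ∈ R⁺(C) (with β₁ + β₂ ∉ R). -/

import Mathlib

/-! If `⟪δ, α⟫ > 0`, then `δ - α` is a root, positive because `δ` is highest. If `⟪δ, α⟫ = 0`,
then `δ - α` is not a root (its reflection in `α` is `δ + α`), and irreducibility provides a root
`γ` with `⟪δ, γ⟫ > 0` and `α + γ ∈ R`. Then `δ - (α + γ)` is a root and
`δ - α = γ + (δ - (α + γ))` is a sum of two positive roots. -/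

open scoped RealInnerProductSpace

variable {V : Type*} [NormedAddCommGroup V] [InnerProductSpace ℝ V]

/-- `R` is a (finite, reduced) root system in the Euclidean space `V`. -/
def IsRootSys (R : Set V) : Prop :=
  R.Finite ∧ (0 : V) ∉ R ∧
  (∀ α ∈ R, ∀ β ∈ R, β - (2 * ⟪β, α⟫ / ⟪α, α⟫) • α ∈ R) ∧
  (∀ α ∈ R, ∀ β ∈ R, ∃ n : ℤ, 2 * ⟪β, α⟫ / ⟪α, α⟫ = (n : ℝ)) ∧
  (∀ α ∈ R, ∀ t : ℝ, t • α ∈ R → t = 1 ∨ t = -1)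

/-- `R` is irreducible. -/
def IsIrreducibleRS (R : Set V) : Prop :=
  R.Nonempty ∧ ∀ R₁ R₂ : Set V, R = R₁ ∪ R₂ →
    (∀ a ∈ R₁, ∀ b ∈ R₂, ⟪a, b⟫ = 0) → R₁ = ∅ ∨ R₂ = ∅

/-- `δ` is the highest root of the chamber described by the regular vector `v`. -/
def IsHighestRoot (R : Set V) (v δ : V) : Prop :=
  δ ∈ R ∧ 0 < ⟪δ, v⟫ ∧ ∀ α ∈ R, 0 < ⟪α, v⟫ → δ + α ∉ R

namespace IsIrreducibleRS

variable {R : Set V}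

lemma subset_of_inner_ne_zero_closed (hirr : IsIrreducibleRS R) {S : Set V}
    (hS : (R ∩ S).Nonempty) (hclosed : ∀ a ∈ R ∩ S, ∀ b ∈ R, ⟪a, b⟫ ≠ 0 → b ∈ S) : R ⊆ S := by
  have horth : ∀ a ∈ R ∩ S, ∀ b ∈ R \ S, ⟪a, b⟫ = 0 := fun a ha b hb => by
    by_contra h
    exact hb.2 (hclosed a ha b hb.1 h)
  rcases hirr.2 _ _ (Set.inter_union_sdiff R S).symm horth with h | h
  · exact absurd h hS.ne_empty
  · exact Set.sdiff_eq_empty.mp h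

end IsIrreducibleRS

namespace IsRootSys

variable {R : Set V} {a b : V}

lemma inner_self_pos (hR : IsRootSys R) (ha : a ∈ R) : 0 < ⟪a, a⟫ :=
  real_inner_self_pos.mpr fun h => hR.2.1 (h ▸ ha)

lemma neg_mem (hR : IsRootSys R) (ha : a ∈ R) : -a ∈ R := by
  have h := hR.2.2.1 a ha a ha
  rwa [mul_div_assoc, div_self (hR.inner_self_pos ha).ne', mul_one, two_smul,
    sub_add_cancel_left] at h

lemma inner_self_le_inner_of_cartan_ne_one (hR : IsRootSys R) (ha : a ∈ R) (hb : b ∈ R)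
    (hpos : 0 < ⟪a, b⟫) (hne : 2 * ⟪a, b⟫ / ⟪b, b⟫ ≠ 1) : ⟪b, b⟫ ≤ ⟪a, b⟫ := by
  have hbb := hR.inner_self_pos hb
  obtain ⟨n, hn⟩ := hR.2.2.2.1 b hb a ha
  have hn0 : (0 : ℝ) < n := by rw [← hn]; positivity
  have hn1 : n ≠ 1 := fun h => hne (by rw [hn, h, Int.cast_one])
  have hn2 : (2 : ℝ) ≤ 2 * ⟪a, b⟫ / ⟪b, b⟫ := by
    have : 0 < n := by exact_mod_cast hn0
    rw [hn]
    exact_mod_cast (show 2 ≤ n by omega)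
  rw [le_div_iff₀ hbb] at hn2
  linarith

lemma cartan_eq_one_of_inner_pos (hR : IsRootSys R) (ha : a ∈ R) (hb : b ∈ R)
    (hpos : 0 < ⟪a, b⟫) (hne : a ≠ b) :
    2 * ⟪a, b⟫ / ⟪b, b⟫ = 1 ∨ 2 * ⟪b, a⟫ / ⟪a, a⟫ = 1 := by
  by_contra! h
  have hb' := hR.inner_self_le_inner_of_cartan_ne_one ha hb hpos h.1
  have ha' := hR.inner_self_le_inner_of_cartan_ne_one hb ha (real_inner_comm a b ▸ hpos) h.2
  have : ⟪a - b, a - b⟫ ≤ 0 := by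
    rw [real_inner_sub_sub_self, real_inner_comm a b] at *
    linarith
  exact hne (sub_eq_zero.mp (real_inner_self_nonpos.mp this))

lemma sub_mem (hR : IsRootSys R) (ha : a ∈ R) (hb : b ∈ R) (hpos : 0 < ⟪a, b⟫) (hne : a ≠ b) :
    a - b ∈ R := by
  rcases hR.cartan_eq_one_of_inner_pos ha hb hpos hne with h | h
  · have hab := hR.2.2.1 b hb a ha
    rwa [h, one_smul] at hab
  · have hba := hR.neg_mem (hR.2.2.1 a ha b hb)
    rwa [h, one_smul, neg_sub] at hba

lemma add_mem (hR : IsRootSys R) (ha : a ∈ R) (hb : b ∈ R) (hneg : ⟪a, b⟫ < 0)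
    (hne : a ≠ -b) : a + b ∈ R := by
  simpa using hR.sub_mem ha (hR.neg_mem hb) (by rw [inner_neg_right]; linarith) hne

lemma exists_inner_ne_zero_of_inner_ne_zero (hR : IsRootSys R) {α β : V} (ha : a ∈ R)
    (hβ : β ∈ R) (hαβ : ⟪α, β⟫ ≠ 0) (haβ : ⟪a, β⟫ ≠ 0) (hab : ⟪a, b⟫ ≠ 0) :
    ∃ γ ∈ R, ⟪α, γ⟫ ≠ 0 ∧ ⟪b, γ⟫ ≠ 0 := by
  obtain hbβ | hbβ := ne_or_eq ⟪b, β⟫ 0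
  · exact ⟨β, hβ, hαβ, hbβ⟩
  obtain hαa | hαa := ne_or_eq ⟪α, a⟫ 0
  · exact ⟨a, ha, hαa, by rwa [real_inner_comm]⟩
  -- the reflection of `a` in `β` is seen by `α` through `β` and by `b` through `a`
  refine ⟨a - (2 * ⟪a, β⟫ / ⟪β, β⟫) • β, hR.2.2.1 β hβ a ha, ?_, ?_⟩
  · have hc : 2 * ⟪a, β⟫ / ⟪β, β⟫ ≠ 0 :=
      div_ne_zero (mul_ne_zero two_ne_zero haβ) (hR.inner_self_pos hβ).ne'
    simpa [inner_sub_right, real_inner_smul_right, hαa] using mul_ne_zero hc hαβ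
  · simpa [inner_sub_right, real_inner_smul_right, hbβ, real_inner_comm a b] using hab

lemma exists_inner_ne_zero_of_irreducible (hR : IsRootSys R) (hirr : IsIrreducibleRS R)
    {α δ : V} (hα : α ∈ R) (hδ : δ ∈ R) : ∃ β ∈ R, ⟪α, β⟫ ≠ 0 ∧ ⟪δ, β⟫ ≠ 0 := by
  have hαα := (hR.inner_self_pos hα).ne'
  refine hirr.subset_of_inner_ne_zero_closed (S := {c | ∃ β ∈ R, ⟪α, β⟫ ≠ 0 ∧ ⟪c, β⟫ ≠ 0})
    ⟨α, hα, α, hα, hαα, hαα⟩ ?_ hδ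
  rintro a ⟨ha, β, hβ, hαβ, haβ⟩ b - hab
  exact hR.exists_inner_ne_zero_of_inner_ne_zero ha hβ hαβ haβ hab

lemma exists_add_mem_of_inner_eq_zero (hR : IsRootSys R) (hirr : IsIrreducibleRS R)
    {α δ : V} (hα : α ∈ R) (hδ : δ ∈ R) (horth : ⟪δ, α⟫ = 0) :
    ∃ γ ∈ R, 0 < ⟪δ, γ⟫ ∧ α + γ ∈ R := by
  obtain ⟨β, hβ, hαβ, hδβ⟩ : ∃ β ∈ R, ⟪α, β⟫ ≠ 0 ∧ 0 < ⟪δ, β⟫ := by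
    obtain ⟨β, hβ, hαβ, hδβ⟩ := hR.exists_inner_ne_zero_of_irreducible hirr hα hδ
    rcases hδβ.lt_or_gt with hlt | hlt
    · exact ⟨-β, hR.neg_mem hβ, by simpa using hαβ, by rw [inner_neg_right]; linarith⟩
    · exact ⟨β, hβ, hαβ, hlt⟩
  rcases hαβ.lt_or_gt with hlt | hlt
  · refine ⟨β, hβ, hδβ, hR.add_mem hα hβ hlt ?_⟩
    rintro rfl
    rw [inner_neg_right, neg_eq_zero] at horth
    linarith
  · refine ⟨β - α, hR.sub_mem hβ hα (real_inner_comm α β ▸ hlt) ?_, ?_, by simpa using hβ⟩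
    · rintro rfl
      linarith
    · rwa [inner_sub_right, horth, sub_zero]

end IsRootSys

namespace IsHighestRoot

variable {R : Set V} {v δ α : V}

lemma inner_nonneg (hR : IsRootSys R) (hδ : IsHighestRoot R v δ) (hα : α ∈ R)
    (hαpos : 0 < ⟪α, v⟫) : 0 ≤ ⟪δ, α⟫ := by
  obtain ⟨hδR, hδv, hhigh⟩ := hδ
  by_contra! h
  refine hhigh α hα hαpos (hR.add_mem hδR hα h ?_)
  rintro rfl
  rw [inner_neg_left] at hδv
  linarith

lemma inner_pos_of_sub_mem (hR : IsRootSys R) (hreg : ∀ α ∈ R, ⟪α, v⟫ ≠ 0)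
    (hδ : IsHighestRoot R v δ) {x : V} (hx : x ∈ R) (hδx : δ - x ∈ R) : 0 < ⟪x, v⟫ := by
  refine (hreg x hx).lt_or_gt.resolve_left fun hneg => ?_
  refine hδ.2.2 (-x) (hR.neg_mem hx) (by rw [inner_neg_left]; linarith) ?_
  rwa [← sub_eq_add_neg]

lemma sub_notMem_of_inner_eq_zero (hR : IsRootSys R) (hδ : IsHighestRoot R v δ) (hα : α ∈ R)
    (hαpos : 0 < ⟪α, v⟫) (horth : ⟪δ, α⟫ = 0) : δ - α ∉ R := by
  intro hmem
  have h := hR.2.2.1 α hα (δ - α) hmem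
  have hcoef : 2 * ⟪δ - α, α⟫ / ⟪α, α⟫ = -2 := by
    rw [inner_sub_left, horth, zero_sub, mul_neg, neg_div, mul_div_assoc,
      div_self (hR.inner_self_pos hα).ne', mul_one]
  rw [hcoef, neg_smul, two_smul, sub_neg_eq_add, sub_add_add_cancel] at h
  exact hδ.2.2 α hα hαpos h

end IsHighestRoot

/-- in an irreducible root system, for every positive root `α ≠ δ` (with `δ`
the highest root of the chamber), the difference `δ − α` is either a positive root or a sum
`β₁ + β₂` of two positive roots with `β₁ + β₂ ∉ R`. -/
theorem highestRoot_sub_root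
    (R : Set V) (hR : IsRootSys R) (hirr : IsIrreducibleRS R)
    (v : V) (hreg : ∀ α ∈ R, ⟪α, v⟫ ≠ 0)
    (δ : V) (hδ : IsHighestRoot R v δ)
    (α : V) (hα : α ∈ R) (hαpos : 0 < ⟪α, v⟫) (hne : α ≠ δ) :
    (δ - α ∈ R ∧ 0 < ⟪δ - α, v⟫) ∨
    (∃ β₁ β₂ : V, β₁ ∈ R ∧ 0 < ⟪β₁, v⟫ ∧ β₂ ∈ R ∧ 0 < ⟪β₂, v⟫ ∧
      δ - α = β₁ + β₂ ∧ β₁ + β₂ ∉ R) := by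
  have hpos_of_sub_mem : ∀ {x}, x ∈ R → δ - x ∈ R → 0 < ⟪x, v⟫ :=
    hδ.inner_pos_of_sub_mem hR hreg
  rcases (hδ.inner_nonneg hR hα hαpos).lt_or_eq with hpos | horth
  · have hmem := hR.sub_mem hδ.1 hα hpos hne.symm
    exact .inl ⟨hmem, hpos_of_sub_mem hmem (by rwa [sub_sub_cancel])⟩
  · have hnot := hδ.sub_notMem_of_inner_eq_zero hR hα hαpos horth.symm
    obtain ⟨γ, hγ, hδγ, hαγ⟩ := hR.exists_add_mem_of_inner_eq_zero hirr hα hδ.1 horth.symm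
    have hγδ : γ ≠ δ := by
      rintro rfl
      exact hδ.2.2 α hα hαpos (by rwa [add_comm])
    have hαγδ : α + γ ≠ δ := by
      rintro rfl
      exact hnot (by rwa [add_sub_cancel_left])
    have hη := hR.sub_mem hδ.1 hαγ (by rwa [inner_add_right, ← horth, zero_add]) hαγδ.symm
    have hsum : γ + (δ - (α + γ)) = δ - α := by abel
    refine .inr ⟨γ, δ - (α + γ), hγ, hpos_of_sub_mem hγ (hR.sub_mem hδ.1 hγ hδγ hγδ.symm), hη,
      hpos_of_sub_mem hη (by rwa [sub_sub_cancel]), hsum.symm, hsum ▸ hnot⟩
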